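/- arXiv:0804.1117 — 5 statements merged into one kernel-verified Lean document; each statement's English description precedes it below -/
import Mathlib

section
/- The function SNR(α₀) = α₀²P₀(Σᵢ αᵢ|fᵢgᵢ|√Pᵢ/√(1+α₀²|fᵢ|²P₀))² / (1 + Σᵢ αᵢ²|gᵢ|²Pᵢ/(1+α₀²|fᵢ|²P₀)) is strictly increasing in α₀ on (0,1], so it is maximized at α₀ = 1. -/
/-!
Write `cᵢ = αᵢ|fᵢgᵢ|√Pᵢ`, `dᵢ = |fᵢ|²P₀` and `eᵢ = αᵢ²|gᵢ|²Pᵢ`. Pulling `α₀` inside the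
square, the numerator is `P₀ (Σᵢ cᵢ · α₀/√(1 + α₀²dᵢ))²` with `cᵢ > 0`, and each
`a ↦ a/√(1 + a²d)` is strictly increasing on `[0, ∞)`, so the numerator is strictly increasing
there. Each term `eᵢ/(1 + α₀²dᵢ)` of the denominator decreases, so the quotient strictly
increases.
-/

open Set Finset

theorem StrictMonoOn.div_of_antitoneOn {α 𝕜 : Type*} [Preorder α] [Field 𝕜] [LinearOrder 𝕜]
    [IsStrictOrderedRing 𝕜] {s : Set α} {N D : α → 𝕜} (hN : StrictMonoOn N s)
    (hD : AntitoneOn D s) (hN0 : ∀ x ∈ s, 0 ≤ N x) (hD0 : ∀ x ∈ s, 0 < D x) :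
    StrictMonoOn (fun x => N x / D x) s := fun x hx y hy hxy =>
  calc N x / D x ≤ N x / D y := div_le_div_of_nonneg_left (hN0 x hx) (hD0 y hy) (hD hx hy hxy.le)
    _ < N y / D y := div_lt_div_of_pos_right (hN hx hy hxy) (hD0 y hy)

theorem strictMonoOn_div_sqrt_one_add_sq_mul {d : ℝ} (hd : 0 ≤ d) :
    StrictMonoOn (fun a : ℝ => a / √(1 + a ^ 2 * d)) (Ici 0) := by
  intro x (hx : 0 ≤ x) y (hy : 0 ≤ y) hxy
  have hsq : x ^ 2 < y ^ 2 := pow_lt_pow_left₀ hxy hx two_ne_zero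
  have key : x ^ 2 / (1 + x ^ 2 * d) < y ^ 2 / (1 + y ^ 2 * d) := by
    rw [div_lt_div_iff₀ (by positivity) (by positivity)]
    linarith
  rw [← sq_lt_sq₀ (by positivity) (by positivity), div_pow, div_pow,
    Real.sq_sqrt (by positivity), Real.sq_sqrt (by positivity)]
  exact key

theorem antitoneOn_div_one_add_sq_mul {e d : ℝ} (he : 0 ≤ e) (hd : 0 ≤ d) :
    AntitoneOn (fun a : ℝ => e / (1 + a ^ 2 * d)) (Ici 0) := by
  intro x (hx : 0 ≤ x) y _ hxy
  have : x ^ 2 ≤ y ^ 2 := pow_le_pow_left₀ hx hxy 2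
  exact div_le_div_of_nonneg_left he (by positivity) (by gcongr)

theorem strictMonoOn_relay_snr {ι : Type*} [Fintype ι] [Nonempty ι] {P₀ : ℝ} (hP₀ : 0 < P₀)
    {c d e : ι → ℝ} (hc : ∀ i, 0 < c i) (hd : ∀ i, 0 ≤ d i) (he : ∀ i, 0 ≤ e i) :
    StrictMonoOn (fun a : ℝ => a ^ 2 * P₀ * (∑ i, c i / √(1 + a ^ 2 * d i)) ^ 2 /
      (1 + ∑ i, e i / (1 + a ^ 2 * d i))) (Ici 0) := by
  set S : ℝ → ℝ := fun a => ∑ i, c i * (a / √(1 + a ^ 2 * d i))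
  have hS0 : ∀ a ∈ Ici (0 : ℝ), 0 ≤ S a := fun a (ha : 0 ≤ a) =>
    sum_nonneg fun i _ => mul_nonneg (hc i).le (by positivity)
  have hS : StrictMonoOn S (Ici 0) := fun x hx y hy hxy =>
    sum_lt_sum_of_nonempty univ_nonempty fun i _ =>
      mul_lt_mul_of_pos_left (strictMonoOn_div_sqrt_one_add_sq_mul (hd i) hx hy hxy) (hc i)
  have hN : StrictMonoOn (fun a => P₀ * S a ^ 2) (Ici 0) := fun x hx y hy hxy =>
    mul_lt_mul_of_pos_left (pow_lt_pow_left₀ (hS hx hy hxy) (hS0 x hx) two_ne_zero) hP₀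
  have hD : AntitoneOn (fun a : ℝ => 1 + ∑ i, e i / (1 + a ^ 2 * d i)) (Ici 0) :=
    fun x hx y hy hxy => add_le_add_right (sum_le_sum fun i _ =>
      antitoneOn_div_one_add_sq_mul (he i) (hd i) hx hy hxy) 1
  refine (hN.div_of_antitoneOn hD (fun a _ => by positivity) fun a _ => ?_).congr fun a _ => ?_
  · have : 0 ≤ ∑ i, e i / (1 + a ^ 2 * d i) :=
      sum_nonneg fun i _ => div_nonneg (he i) (by have := hd i; positivity)
    linarith
  · have hSa : S a = a * ∑ i, c i / √(1 + a ^ 2 * d i) := by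
      rw [mul_sum]
      exact sum_congr rfl fun i _ => by ring
    simp only [hSa]
    ring

/-- The receive SNR of a two-step amplify-and-forward relay network
with no direct link is strictly increasing in the transmitter power fraction
`α₀` on `(0,1]`, hence maximized at `α₀ = 1`. -/
theorem stmt_0 (R : ℕ) (hR : 1 ≤ R) (P0 : ℝ) (hP0 : 0 < P0)
    (P f g α : Fin R → ℝ)
    (hP : ∀ i, 0 < P i) (hf : ∀ i, 0 < f i) (hg : ∀ i, 0 < g i)
    (hα : ∀ i, α i ∈ Set.Ioc (0 : ℝ) 1)
    (SNR : ℝ → ℝ)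
    (hSNR : ∀ a0 : ℝ, SNR a0 =
      a0 ^ 2 * P0 *
        (∑ i, α i * (f i * g i) * Real.sqrt (P i) /
            Real.sqrt (1 + a0 ^ 2 * (f i) ^ 2 * P0)) ^ 2 /
        (1 + ∑ i, (α i) ^ 2 * (g i) ^ 2 * P i / (1 + a0 ^ 2 * (f i) ^ 2 * P0))) :
    StrictMonoOn SNR (Set.Ioc 0 1) ∧
      ∀ a0 ∈ Set.Ioc (0 : ℝ) 1, SNR a0 ≤ SNR 1 := by
  have : Nonempty (Fin R) := Fin.pos_iff_nonempty.mp hR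
  have hmono : StrictMonoOn SNR (Ioc 0 1) := by
    refine ((strictMonoOn_relay_snr hP0 (c := fun i => α i * (f i * g i) * √(P i))
      (d := fun i => f i ^ 2 * P0) (e := fun i => α i ^ 2 * g i ^ 2 * P i)
      (fun i => by have := (hα i).1; have := hf i; have := hg i; have := hP i; positivity)
      (fun i => by positivity) (fun i => by have := hP i; positivity)).mono
      (Ioc_subset_Ioi_self.trans Ioi_subset_Ici_self)).congr fun a _ => ?_
    simp only [hSNR, mul_assoc]
  exact ⟨hmono, fun a0 ha => hmono.monotoneOn ha ⟨one_pos, le_rfl⟩ ha.2⟩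
end

section
/- With φⱼ = cⱼ/aⱼ ordered decreasingly as φ_{τ₁} ≥ … ≥ φ_{τ_R}, and radii defined by r₀ = 0, rᵢ = sqrt(φ_{τᵢ}⁻² ‖c_{τ_{i+1},…,τ_R}‖² + Σ_{m=1}^{i} a_{τ_m}²) for i = 1,…,R (with the convention that the c-tail is empty for i = R), the sequence (rᵢ) is nondecreasing: r_{i-1} ≤ rᵢ for all i = 1,…,R, and r_R = ‖a‖. -/
/-!
Write `ψₖ = a_{τₖ} / c_{τₖ}`, which is nondecreasing in `k`. Passing from `r_{i-1}²` to `rᵢ²`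
moves the term `c_{τᵢ}²` out of the `c`-tail and adds `a_{τᵢ}²` to the `a`-head. Since
`ψ_{i-1}² c_{τᵢ}² ≤ ψᵢ² c_{τᵢ}² = a_{τᵢ}²` and `ψ_{i-1}² ≤ ψᵢ²` on the remaining tail, the radius
can only grow. At `i = R` the tail is empty and the head is all of `a`.
-/

open Finset

theorem inv_sq_mul_add_le_of_div_le {a c φ T A : ℝ} (ha : 0 < a) (hc : 0 < c) (hφ : c / a ≤ φ)
    (hT : 0 ≤ T) : φ⁻¹ ^ 2 * (c ^ 2 + T) + A ≤ (c / a)⁻¹ ^ 2 * T + (a ^ 2 + A) := by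
  have hca : 0 < c / a := div_pos hc ha
  have hφ₀ : 0 ≤ φ⁻¹ := inv_nonneg.2 (hca.trans_le hφ).le
  calc φ⁻¹ ^ 2 * (c ^ 2 + T) + A ≤ (c / a)⁻¹ ^ 2 * (c ^ 2 + T) + A := by gcongr
    _ = (c / a)⁻¹ ^ 2 * T + (a ^ 2 + A) := by field_simp; ring

namespace Fin

variable {M : Type*} [AddCommMonoid M] {n : ℕ}

theorem sum_filter_le_val_eq_add (f : Fin n → M) (k : ℕ) (hk : k < n) :
    ∑ m ∈ univ.filter (fun m : Fin n => k ≤ (m : ℕ)), f m =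
      f ⟨k, hk⟩ + ∑ m ∈ univ.filter (fun m : Fin n => k + 1 ≤ (m : ℕ)), f m := by
  rw [← sum_insert (by simp)]
  congr 1
  ext m
  simp only [mem_filter, mem_insert, mem_univ, true_and, Fin.ext_iff]
  omega

theorem sum_filter_val_lt_succ (f : Fin n → M) (k : ℕ) (hk : k < n) :
    ∑ m ∈ univ.filter (fun m : Fin n => (m : ℕ) < k + 1), f m =
      f ⟨k, hk⟩ + ∑ m ∈ univ.filter (fun m : Fin n => (m : ℕ) < k), f m := by
  rw [← sum_insert (by simp)]
  congr 1
  ext m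
  simp only [mem_filter, mem_insert, mem_univ, true_and, Fin.ext_iff]
  omega

end Fin

theorem radius_sq_le_succ {R : ℕ} (a c : Fin R → ℝ) (ha : ∀ j, 0 < a j) (hc : ∀ j, 0 < c j)
    (k : ℕ) (hk : k + 1 < R)
    (hφ : c ⟨k + 1, hk⟩ / a ⟨k + 1, hk⟩ ≤ c ⟨k, by omega⟩ / a ⟨k, by omega⟩) :
    (c ⟨k, by omega⟩ / a ⟨k, by omega⟩)⁻¹ ^ 2 *
        ∑ m ∈ univ.filter (fun m : Fin R => k + 1 ≤ (m : ℕ)), c m ^ 2 +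
      ∑ m ∈ univ.filter (fun m : Fin R => (m : ℕ) < k + 1), a m ^ 2 ≤
    (c ⟨k + 1, hk⟩ / a ⟨k + 1, hk⟩)⁻¹ ^ 2 *
        ∑ m ∈ univ.filter (fun m : Fin R => k + 1 + 1 ≤ (m : ℕ)), c m ^ 2 +
      ∑ m ∈ univ.filter (fun m : Fin R => (m : ℕ) < k + 1 + 1), a m ^ 2 := by
  rw [Fin.sum_filter_le_val_eq_add _ (k + 1) hk, Fin.sum_filter_val_lt_succ _ (k + 1) hk]
  exact inv_sq_mul_add_le_of_div_le (ha _) (hc _) hφ (sum_nonneg fun _ _ => sq_nonneg _)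

/-- With `φⱼ = cⱼ/aⱼ` ordered decreasingly by the permutation `τ`
(0-based: `τ m` is the paper's `τ_{m+1}`), and radii `r₀ = 0`,
`rᵢ = sqrt(φ_{τᵢ}⁻² ‖c_{τ_{i+1},…,τ_R}‖² + Σ_{m=1}^{i} a_{τ_m}²)` for
`i = 1,…,R`, the sequence `(rᵢ)` is nondecreasing and `r_R = ‖a‖`. -/
theorem stmt_2 (R : ℕ) (hR : 1 ≤ R) (a c : Fin R → ℝ)
    (ha : ∀ j, 0 < a j) (hc : ∀ j, 0 < c j) (τ : Equiv.Perm (Fin R))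
    (hord : ∀ i j : Fin R, i ≤ j → c (τ j) / a (τ j) ≤ c (τ i) / a (τ i))
    (rseq : ℕ → ℝ)
    (hr0 : rseq 0 = 0)
    (hri : ∀ i, 1 ≤ i → (hiR : i ≤ R) → rseq i =
      Real.sqrt ((c (τ ⟨i - 1, by omega⟩) / a (τ ⟨i - 1, by omega⟩))⁻¹ ^ 2 *
          (∑ m ∈ Finset.univ.filter (fun m : Fin R => i ≤ (m : ℕ)), (c (τ m)) ^ 2) +
        ∑ m ∈ Finset.univ.filter (fun m : Fin R => (m : ℕ) < i), (a (τ m)) ^ 2)) :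
    (∀ i, 1 ≤ i → i ≤ R → rseq (i - 1) ≤ rseq i) ∧
      rseq R = Real.sqrt (∑ j, (a j) ^ 2) := by
  refine ⟨fun i hi hiR => ?_, ?_⟩
  · obtain rfl | hi2 := hi.eq_or_lt
    · rw [Nat.sub_self, hr0, hri 1 le_rfl hiR]
      exact Real.sqrt_nonneg _
    · obtain ⟨k, rfl⟩ : ∃ k, i = k + 2 := ⟨i - 2, by omega⟩
      show rseq (k + 1) ≤ rseq (k + 2)
      rw [hri (k + 1) (by omega) (by omega), hri (k + 2) (by omega) hiR]
      exact Real.sqrt_le_sqrt <| radius_sq_le_succ (a ∘ τ) (c ∘ τ) (fun j => ha (τ j)) (fun j => hc (τ j))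
        k hiR (hord _ _ (Fin.le_def.2 (Nat.le_succ k)))
  · have hhead : univ.filter (fun m : Fin R => (m : ℕ) < R) = univ :=
      filter_true_of_mem fun m _ => m.isLt
    have htail : univ.filter (fun m : Fin R => R ≤ (m : ℕ)) = ∅ :=
      filter_false_of_mem fun m _ => not_le.2 m.isLt
    rw [hri R hR le_rfl, hhead, htail, sum_empty, mul_zero, zero_add]
    exact congrArg Real.sqrt (Equiv.sum_comp τ fun j => a j ^ 2)
end

section
/- For each i with λᵢ < φ_{τ_{i+1}}⁻¹ (so the subproblem-i optimizer is interior in λ), the optimal SNR of subproblem i equals Σ_{m=i+1}^{R} c_{τ_m}² + (Σ_{m=1}^{i} b_{τ_m})²/(1 + Σ_{m=1}^{i} a_{τ_m}²). -/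
/-- When `λᵢ < φ_{τ_{i+1}}⁻¹` (so the subproblem-`i` optimizer is
interior), the optimal SNR of subproblem `i`, namely `ξᵢ(λᵢ)` with
`ξᵢ(λ) = (Σ_{m≤i} b_{τ_m} + ‖c_tail‖²λ)²/(1 + Σ_{m≤i} a_{τ_m}² + ‖c_tail‖²λ²)`,
equals `Σ_{m=i+1}^{R} c_{τ_m}² + (Σ_{m=1}^{i} b_{τ_m})²/(1 + Σ_{m=1}^{i} a_{τ_m}²)`
(0-based indexing: `τ m` is the paper's `τ_{m+1}`, `bⱼ = aⱼcⱼ`). -/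
theorem stmt_9 (R : ℕ) (hR : 1 ≤ R) (a c : Fin R → ℝ)
    (ha : ∀ j, 0 < a j) (hc : ∀ j, 0 < c j) (τ : Equiv.Perm (Fin R))
    (hord : ∀ i j : Fin R, i ≤ j → c (τ j) / a (τ j) ≤ c (τ i) / a (τ i))
    (i : ℕ) (hi1 : 1 ≤ i) (hiR : i ≤ R)
    (A B C lami : ℝ)
    (hA : A = ∑ m ∈ Finset.univ.filter (fun m : Fin R => (m : ℕ) < i), (a (τ m)) ^ 2)
    (hB : B = ∑ m ∈ Finset.univ.filter (fun m : Fin R => (m : ℕ) < i), a (τ m) * c (τ m))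
    (hC : C = ∑ m ∈ Finset.univ.filter (fun m : Fin R => i ≤ (m : ℕ)), (c (τ m)) ^ 2)
    (hlami : lami = (1 + A) / B)
    (hcond : ∀ h : i < R, lami < (c (τ ⟨i, h⟩) / a (τ ⟨i, h⟩))⁻¹) :
    (B + C * lami) ^ 2 / (1 + A + C * lami ^ 2) = C + B ^ 2 / (1 + A) := by
  have hApos : 0 ≤ A := by
    rw [hA]; exact Finset.sum_nonneg fun m _ => sq_nonneg _
  have hBpos : 0 < B := by
    rw [hB]
    apply Finset.sum_pos
    · intro m _; exact mul_pos (ha _) (hc _)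
    · refine ⟨⟨0, lt_of_lt_of_le hi1 hiR⟩, ?_⟩
      simp only [Finset.mem_filter, Finset.mem_univ, true_and]
      omega
  have hCpos : 0 ≤ C := by
    rw [hC]; exact Finset.sum_nonneg fun m _ => sq_nonneg _
  have h1A : (0:ℝ) < 1 + A := by linarith
  have hLpos : 0 < lami := by rw [hlami]; positivity
  have hden : 0 < 1 + A + C * lami ^ 2 := by positivity
  have hkey : 1 + A = lami * B := by
    rw [hlami, div_mul_cancel₀ _ hBpos.ne']
  rw [hkey] at hden ⊢
  field_simp
  ring
end

section
/- Let i₀ be the smallest index with λᵢ < φ_{τ_{i+1}}⁻¹ and define x* by x*_{τⱼ} = 1 for j ≤ i₀ and x*_j = λ_{i₀}·φⱼ for j ∈ {τ_{i₀+1},…,τ_R}. Then x* lies in the box [0,1]^R and maximizes ⟨b,x⟩²/(1+‖Ax‖²) over all x ∈ [0,1]^R, where A = diag(a). -/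
/-!
Write `L = λ_{i₀}`. Then `x*_j = min (1, L φ_j)`: a coordinate is saturated exactly when
`a_j² ≤ L b_j`. For the saturated ones this follows from the ordering by `φ` and from
`a²/b ≤ λ_{i₀}` at the last saturated position, where `λ_{i₀}` is the mediant of `λ_{i₀-1}`
and `a²/b` and the minimality of `i₀` gives `a²/b ≤ λ_{i₀-1}`; for the others from the
defining inequality of `i₀` and the ordering again. Moreover the definition of `λ_{i₀}` gives
`1 + ‖A x*‖² = L ⟨b, x*⟩`. These are KKT conditions with multiplier `L`: for every `x` in
the box they yield `L ⟨b, x⟩ ≤ 1 + ⟨A x*, A x⟩`, and Cauchy–Schwarz in `ℝ^{1+R}` bounds the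
right side by `√(1 + ‖A x*‖²) √(1 + ‖A x‖²)`. Squaring and dividing by
`1 + ‖A x*‖² = L ⟨b, x*⟩` gives the claim.
-/

open Finset

section Certificate

variable {ι : Type*} [Fintype ι]

noncomputable def relaySNR (a b x : ι → ℝ) : ℝ :=
  (∑ j, b j * x j) ^ 2 / (1 + ∑ j, (a j * x j) ^ 2)

theorem sq_one_add_sum_mul_le (u v : ι → ℝ) :
    (1 + ∑ j, u j * v j) ^ 2 ≤ (1 + ∑ j, u j ^ 2) * (1 + ∑ j, v j ^ 2) := by
  simpa [Fintype.sum_option] using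
    sum_mul_sq_le_sq_mul_sq univ (fun o : Option ι => o.elim 1 u) (fun o => o.elim 1 v)

variable {a b xs : ι → ℝ} {L : ℝ}

theorem mul_sum_le_of_kkt (hcoef : ∀ j, a j ^ 2 * xs j ≤ L * b j)
    (hslack : ∀ j, xs j = 1 ∨ a j ^ 2 * xs j = L * b j)
    (hbal : 1 + ∑ j, (a j * xs j) ^ 2 = L * ∑ j, b j * xs j)
    {x : ι → ℝ} (hx : ∀ j, x j ≤ 1) :
    L * ∑ j, b j * x j ≤ 1 + ∑ j, a j * xs j * (a j * x j) := by
  have hterm : ∀ j, (L * b j - a j ^ 2 * xs j) * x j ≤ (L * b j - a j ^ 2 * xs j) * xs j := by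
    intro j
    rcases hslack j with h | h
    · have hc := hcoef j
      rw [h] at hc ⊢
      exact mul_le_mul_of_nonneg_left (hx j) (by linarith)
    · simp [h]
  have hsum := sum_le_sum fun j (_ : j ∈ univ) => hterm j
  have hx_eq : ∑ j, (L * b j - a j ^ 2 * xs j) * x j
      = L * ∑ j, b j * x j - ∑ j, a j * xs j * (a j * x j) := by
    rw [mul_sum, ← sum_sub_distrib]; exact sum_congr rfl fun j _ => by ring
  have hxs_eq : ∑ j, (L * b j - a j ^ 2 * xs j) * xs j
      = L * ∑ j, b j * xs j - ∑ j, (a j * xs j) ^ 2 := by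
    rw [mul_sum, ← sum_sub_distrib]; exact sum_congr rfl fun j _ => by ring
  linarith

theorem relaySNR_le_of_kkt (hL : 0 < L) (hb : ∀ j, 0 ≤ b j)
    (hcoef : ∀ j, a j ^ 2 * xs j ≤ L * b j)
    (hslack : ∀ j, xs j = 1 ∨ a j ^ 2 * xs j = L * b j)
    (hbal : 1 + ∑ j, (a j * xs j) ^ 2 = L * ∑ j, b j * xs j)
    {x : ι → ℝ} (hx : ∀ j, 0 ≤ x j ∧ x j ≤ 1) :
    relaySNR a b x ≤ relaySNR a b xs := by
  unfold relaySNR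
  set sx := ∑ j, b j * x j
  set qx := 1 + ∑ j, (a j * x j) ^ 2
  set ss := ∑ j, b j * xs j
  set qs := 1 + ∑ j, (a j * xs j) ^ 2
  have hqx : 0 < qx := by positivity
  have hqs : 0 < qs := by positivity
  have hsx : 0 ≤ L * sx := mul_nonneg hL.le (sum_nonneg fun j _ => mul_nonneg (hb j) (hx j).1)
  have hkey : (L * sx) ^ 2 ≤ qs * qx := by
    calc (L * sx) ^ 2 ≤ (1 + ∑ j, a j * xs j * (a j * x j)) ^ 2 :=
          pow_le_pow_left₀ hsx (mul_sum_le_of_kkt hcoef hslack hbal fun j => (hx j).2) 2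
      _ ≤ qs * qx := sq_one_add_sum_mul_le _ _
  rw [div_le_div_iff₀ hqx hqs]
  refine le_of_mul_le_mul_left ?_ (by positivity : 0 < L ^ 2 * qs)
  calc L ^ 2 * qs * (sx ^ 2 * qs) = qs * qs * (L * sx) ^ 2 := by ring
    _ ≤ qs * qs * (qs * qx) := by gcongr
    _ = L ^ 2 * qs * (ss ^ 2 * qx) := by rw [hbal]; ring

end Certificate

section Waterfill

variable {ι : Type*} {a b xs : ι → ℝ} {L : ℝ} (p : ι → Prop) [DecidablePred p]

theorem waterfill_mem_box (ha : ∀ j, a j ≠ 0) (hb : ∀ j, 0 ≤ b j) (hL : 0 < L)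
    (hxs : ∀ j, xs j = if p j then 1 else L * (b j / a j ^ 2))
    (htail_le : ∀ j, ¬ p j → L * b j ≤ a j ^ 2) (j : ι) :
    0 ≤ xs j ∧ xs j ≤ 1 := by
  rw [hxs]
  split_ifs with hj
  · exact ⟨zero_le_one, le_rfl⟩
  · refine ⟨mul_nonneg hL.le (div_nonneg (hb j) (sq_nonneg _)), ?_⟩
    rw [← mul_div_assoc, div_le_one (pow_two_pos_of_ne_zero (ha j))]
    exact htail_le j hj

variable [Fintype ι]

theorem one_add_sum_sq_eq_of_waterfill (ha : ∀ j, a j ≠ 0)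
    (hxs : ∀ j, xs j = if p j then 1 else L * (b j / a j ^ 2))
    (hhead : L * ∑ j ∈ univ.filter p, b j = 1 + ∑ j ∈ univ.filter p, a j ^ 2) :
    1 + ∑ j, (a j * xs j) ^ 2 = L * ∑ j, b j * xs j := by
  have hterm : ∀ j, (a j * xs j) ^ 2 - L * (b j * xs j) = if p j then a j ^ 2 - L * b j else 0 := by
    intro j
    rw [hxs]
    split_ifs
    · ring
    · field_simp [ha j]
      ring
  have hsum := sum_congr rfl fun j (_ : j ∈ univ) => hterm j
  rw [sum_sub_distrib, ← mul_sum, ← sum_filter, sum_sub_distrib, ← mul_sum] at hsum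
  linarith

theorem relaySNR_le_of_waterfill (ha : ∀ j, a j ≠ 0) (hb : ∀ j, 0 ≤ b j) (hL : 0 < L)
    (hxs : ∀ j, xs j = if p j then 1 else L * (b j / a j ^ 2))
    (hhead_le : ∀ j, p j → a j ^ 2 ≤ L * b j)
    (hhead : L * ∑ j ∈ univ.filter p, b j = 1 + ∑ j ∈ univ.filter p, a j ^ 2)
    {x : ι → ℝ} (hx : ∀ j, 0 ≤ x j ∧ x j ≤ 1) :
    relaySNR a b x ≤ relaySNR a b xs := by
  have hcoef_eq : ∀ j, ¬ p j → a j ^ 2 * xs j = L * b j := fun j hj => by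
    rw [hxs, if_neg hj]; field_simp [ha j]
  refine relaySNR_le_of_kkt hL hb (fun j => ?_) (fun j => ?_)
    (one_add_sum_sq_eq_of_waterfill p ha hxs hhead) hx
  · by_cases hj : p j
    · rw [hxs, if_pos hj, mul_one]; exact hhead_le j hj
    · exact (hcoef_eq j hj).le
  · by_cases hj : p j
    · exact .inl (by rw [hxs, if_pos hj])
    · exact .inr (hcoef_eq j hj)

end Waterfill

theorem div_le_add_div_add {x y N D : ℝ} (hy : 0 < y) (hD : 0 ≤ D) (h : x * D ≤ N * y) :
    x / y ≤ (N + x) / (D + y) := by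
  rw [div_le_div_iff₀ hy (by positivity)]
  linarith

section Prefix

variable {R : ℕ} (τ : Equiv.Perm (Fin R))

def prefixSum (f : Fin R → ℝ) (i : ℕ) : ℝ :=
  ∑ m ∈ univ.filter (fun m : Fin R => (m : ℕ) < i), f (τ m)

theorem prefixSum_eq_sum_filter (f : Fin R → ℝ) (i : ℕ) :
    prefixSum τ f i = ∑ j ∈ univ.filter (fun j => (τ.symm j : ℕ) < i), f j :=
  sum_equiv τ (by simp) fun _ _ => rfl

theorem prefixSum_zero (f : Fin R → ℝ) : prefixSum τ f 0 = 0 := by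
  simp [prefixSum]

theorem prefixSum_succ (f : Fin R → ℝ) {i : ℕ} (hi : i < R) :
    prefixSum τ f (i + 1) = prefixSum τ f i + f (τ ⟨i, hi⟩) := by
  have : univ.filter (fun m : Fin R => (m : ℕ) < i + 1)
      = insert ⟨i, hi⟩ (univ.filter fun m : Fin R => (m : ℕ) < i) := by
    ext m
    simp only [mem_filter, mem_univ, true_and, mem_insert, Fin.ext_iff]
    omega
  rw [prefixSum, this, sum_insert (by simp), add_comm, prefixSum]

theorem prefixSum_nonneg {f : Fin R → ℝ} (hf : ∀ j, 0 ≤ f j) (i : ℕ) : 0 ≤ prefixSum τ f i :=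
  sum_nonneg fun _ _ => hf _

theorem prefixSum_pos {f : Fin R → ℝ} (hf : ∀ j, 0 < f j) {i : ℕ} (hi : 0 < i) (hiR : i ≤ R) :
    0 < prefixSum τ f i :=
  sum_pos (fun _ _ => hf _) ⟨⟨0, by omega⟩, by simpa⟩

variable {a b : Fin R → ℝ} {lam : ℕ → ℝ}

theorem sq_div_le_lam_succ (hb : ∀ j, 0 < b j)
    (hlam : ∀ i, lam i = (1 + prefixSum τ (fun j => a j ^ 2) i) / prefixSum τ b i)
    {k : ℕ} (hk : k < R) (hstop : 0 < k → a (τ ⟨k, hk⟩) ^ 2 / b (τ ⟨k, hk⟩) ≤ lam k) :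
    a (τ ⟨k, hk⟩) ^ 2 / b (τ ⟨k, hk⟩) ≤ lam (k + 1) := by
  rw [hlam, prefixSum_succ τ _ hk, prefixSum_succ τ _ hk, ← add_assoc]
  refine div_le_add_div_add (hb _) (prefixSum_nonneg τ (fun j => (hb j).le) k) ?_
  rcases k.eq_zero_or_pos with rfl | hk0
  · simpa [prefixSum_zero] using (hb _).le
  · have hstop := hstop hk0
    rwa [hlam, div_le_div_iff₀ (hb _) (prefixSum_pos τ hb hk0 hk.le)] at hstop

theorem sq_le_lam_mul_of_lt (hb : ∀ j, 0 < b j) (hmono : Monotone fun m => a (τ m) ^ 2 / b (τ m))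
    (hlam : ∀ i, lam i = (1 + prefixSum τ (fun j => a j ^ 2) i) / prefixSum τ b i)
    {i₀ : ℕ} (hi₀1 : 1 ≤ i₀) (hi₀R : i₀ ≤ R)
    (hmin : ∀ i : ℕ, 1 ≤ i → (∀ h : i < R, lam i < a (τ ⟨i, h⟩) ^ 2 / b (τ ⟨i, h⟩)) → i₀ ≤ i)
    {j : Fin R} (hj : (τ.symm j : ℕ) < i₀) : a j ^ 2 ≤ lam i₀ * b j := by
  obtain ⟨k, rfl⟩ : ∃ k, i₀ = k + 1 := ⟨i₀ - 1, by omega⟩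
  have hk : k < R := by omega
  have hstop : 0 < k → a (τ ⟨k, hk⟩) ^ 2 / b (τ ⟨k, hk⟩) ≤ lam k := fun hk0 => by
    by_contra! h
    have := hmin k hk0 fun _ => h
    omega
  have hjk : τ.symm j ≤ ⟨k, hk⟩ := Fin.le_def.2 (by simp only; omega)
  have := (hmono hjk).trans (sq_div_le_lam_succ τ hb hlam hk hstop)
  simp only [Equiv.apply_symm_apply] at this
  rwa [div_le_iff₀ (hb j)] at this

theorem lam_mul_le_sq_of_le (hb : ∀ j, 0 < b j) (hmono : Monotone fun m => a (τ m) ^ 2 / b (τ m))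
    {i₀ : ℕ} (hcond : ∀ h : i₀ < R, lam i₀ < a (τ ⟨i₀, h⟩) ^ 2 / b (τ ⟨i₀, h⟩))
    {j : Fin R} (hj : i₀ ≤ (τ.symm j : ℕ)) : lam i₀ * b j ≤ a j ^ 2 := by
  have h : i₀ < R := hj.trans_lt (τ.symm j).isLt
  have := (hcond h).le.trans (hmono (show (⟨i₀, h⟩ : Fin R) ≤ τ.symm j from hj))
  simp only [Equiv.apply_symm_apply] at this
  rwa [le_div_iff₀ (hb j)] at this

end Prefix

theorem stmt_11_general (R : ℕ) (a b : Fin R → ℝ)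
    (ha : ∀ j, 0 < a j) (hb : ∀ j, 0 < b j)
    (c φ : Fin R → ℝ) (hc : ∀ j, c j = b j / a j) (hφ : ∀ j, φ j = c j / a j)
    (τ : Equiv.Perm (Fin R))
    (hord : ∀ i j : Fin R, i ≤ j → φ (τ j) ≤ φ (τ i))
    (lam : ℕ → ℝ)
    (hlam : ∀ i : ℕ, lam i =
      (1 + ∑ m ∈ Finset.univ.filter (fun m : Fin R => (m : ℕ) < i), (a (τ m)) ^ 2) /
        (∑ m ∈ Finset.univ.filter (fun m : Fin R => (m : ℕ) < i), b (τ m)))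
    (i₀ : ℕ) (hi₀1 : 1 ≤ i₀) (hi₀R : i₀ ≤ R)
    (hcond : ∀ h : i₀ < R, lam i₀ < (φ (τ ⟨i₀, h⟩))⁻¹)
    (hmin : ∀ i : ℕ, 1 ≤ i → (∀ h : i < R, lam i < (φ (τ ⟨i, h⟩))⁻¹) → i₀ ≤ i)
    (xstar : Fin R → ℝ)
    (hxstar : ∀ j : Fin R, xstar j =
      if ((τ.symm j : Fin R) : ℕ) < i₀ then 1 else lam i₀ * φ j) :
    (∀ j, 0 ≤ xstar j ∧ xstar j ≤ 1) ∧
    (∀ x : Fin R → ℝ, (∀ j, 0 ≤ x j ∧ x j ≤ 1) →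
      (∑ j, b j * x j) ^ 2 / (1 + ∑ j, (a j * x j) ^ 2) ≤
      (∑ j, b j * xstar j) ^ 2 / (1 + ∑ j, (a j * xstar j) ^ 2)) := by
  obtain rfl : φ = fun j => b j / a j ^ 2 := funext fun j => by rw [hφ, hc, div_div, sq]
  simp only [inv_div] at hcond hmin
  have hmono : Monotone fun m => a (τ m) ^ 2 / b (τ m) := fun i j hij => by
    simpa only [inv_div] using inv_anti₀ (div_pos (hb _) (pow_pos (ha _) 2)) (hord i j hij)
  have hlam' : ∀ i, lam i = (1 + prefixSum τ (fun j => a j ^ 2) i) / prefixSum τ b i := hlam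
  have hD := prefixSum_pos τ hb hi₀1 hi₀R
  have hL : 0 < lam i₀ := by
    rw [hlam']
    exact div_pos (by linarith [prefixSum_nonneg τ (fun j => sq_nonneg (a j)) i₀]) hD
  have hbal : lam i₀ * ∑ j ∈ univ.filter (fun j => (τ.symm j : ℕ) < i₀), b j
      = 1 + ∑ j ∈ univ.filter (fun j => (τ.symm j : ℕ) < i₀), a j ^ 2 := by
    rw [← prefixSum_eq_sum_filter, ← prefixSum_eq_sum_filter, hlam', div_mul_cancel₀ _ hD.ne']
  have ha' : ∀ j, a j ≠ 0 := fun j => (ha j).ne'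
  have hb' : ∀ j, 0 ≤ b j := fun j => (hb j).le
  exact ⟨waterfill_mem_box _ ha' hb' hL hxstar
      fun j hj => lam_mul_le_sq_of_le τ hb hmono hcond (not_lt.1 hj),
    fun x hx => relaySNR_le_of_waterfill _ ha' hb' hL hxstar
      (fun j hj => sq_le_lam_mul_of_lt τ hb hmono hlam' hi₀1 hi₀R hmin hj) hbal hx⟩

/-- main theorem: Let `i₀` be the smallest index with
`λ_{i₀} < φ_{τ_{i₀+1}}⁻¹` (with the convention `φ_{τ_{R+1}}⁻¹ = ∞`) and
define `x*` by `x*_{τⱼ} = 1` for `j ≤ i₀` and `x*_j = λ_{i₀}·φⱼ` for the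
remaining indices. Then `x* ∈ [0,1]^R` and `x*` maximizes
`⟨b,x⟩²/(1+‖Ax‖²)`, `A = diag(a)`, over the box `[0,1]^R`
(0-based: `τ m` is the paper's `τ_{m+1}`, `cⱼ = bⱼ/aⱼ`, `φⱼ = cⱼ/aⱼ`). -/
theorem stmt_11 (R : ℕ) (hR : 1 ≤ R) (a b : Fin R → ℝ)
    (ha : ∀ j, 0 < a j) (hb : ∀ j, 0 < b j)
    (c φ : Fin R → ℝ) (hc : ∀ j, c j = b j / a j) (hφ : ∀ j, φ j = c j / a j)
    (τ : Equiv.Perm (Fin R))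
    (hord : ∀ i j : Fin R, i ≤ j → φ (τ j) ≤ φ (τ i))
    (lam : ℕ → ℝ)
    (hlam : ∀ i : ℕ, lam i =
      (1 + ∑ m ∈ Finset.univ.filter (fun m : Fin R => (m : ℕ) < i), (a (τ m)) ^ 2) /
        (∑ m ∈ Finset.univ.filter (fun m : Fin R => (m : ℕ) < i), b (τ m)))
    (i₀ : ℕ) (hi₀1 : 1 ≤ i₀) (hi₀R : i₀ ≤ R)
    (hcond : ∀ h : i₀ < R, lam i₀ < (φ (τ ⟨i₀, h⟩))⁻¹)
    (hmin : ∀ i : ℕ, 1 ≤ i → (∀ h : i < R, lam i < (φ (τ ⟨i, h⟩))⁻¹) → i₀ ≤ i)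
    (xstar : Fin R → ℝ)
    (hxstar : ∀ j : Fin R, xstar j =
      if ((τ.symm j : Fin R) : ℕ) < i₀ then 1 else lam i₀ * φ j) :
    (∀ j, 0 ≤ xstar j ∧ xstar j ≤ 1) ∧
    (∀ x : Fin R → ℝ, (∀ j, 0 ≤ x j ∧ x j ≤ 1) →
      (∑ j, b j * x j) ^ 2 / (1 + ∑ j, (a j * x j) ^ 2) ≤
      (∑ j, b j * xstar j) ^ 2 / (1 + ∑ j, (a j * xstar j) ^ 2)) :=
  stmt_11_general R a b ha hb c φ hc hφ τ hord lam hlam i₀ hi₀1 hi₀R hcond hmin xstar hxstar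
end

section
/- In the optimal power control solution x* (as in the main theorem), if φ_k > φ_l then x*_k ≥ x*_l: a relay with a larger ratio φ uses a fraction of its power at least as large. -/
/-- In the optimal power control solution `x*` of the main
theorem (`x*_{τⱼ} = 1` for `j ≤ i₀`, `x*_j = λ_{i₀}φⱼ` otherwise, where
`0 ≤ λ_{i₀}` and `λ_{i₀} ≤ φⱼ⁻¹` for unsaturated `j`), if `φ_k > φ_l` then
`x*_k ≥ x*_l`: a relay with a larger ratio `φ` uses a fraction of its power
at least as large (0-based: `τ m` is the paper's `τ_{m+1}`). -/
theorem stmt_12 (R : ℕ) (hR : 1 ≤ R) (a c : Fin R → ℝ)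
    (ha : ∀ j, 0 < a j) (hc : ∀ j, 0 < c j)
    (φ : Fin R → ℝ) (hφ : ∀ j, φ j = c j / a j)
    (τ : Equiv.Perm (Fin R))
    (hord : ∀ i j : Fin R, i ≤ j → φ (τ j) ≤ φ (τ i))
    (i₀ : ℕ) (hi₀1 : 1 ≤ i₀) (hi₀R : i₀ ≤ R)
    (lam0 : ℝ) (hlam0 : 0 ≤ lam0)
    (hbound : ∀ j : Fin R, i₀ ≤ ((τ.symm j : Fin R) : ℕ) → lam0 ≤ (φ j)⁻¹)
    (xstar : Fin R → ℝ)
    (hxstar : ∀ j : Fin R, xstar j =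
      if ((τ.symm j : Fin R) : ℕ) < i₀ then 1 else lam0 * φ j) :
    ∀ k l : Fin R, φ l < φ k → xstar l ≤ xstar k := by
  intro k l hkl
  have hφpos : ∀ j, 0 < φ j := fun j => by
    rw [hφ]; exact div_pos (hc j) (ha j)
  rw [hxstar k, hxstar l]
  by_cases hl : ((τ.symm l : Fin R) : ℕ) < i₀
  · by_cases hk : ((τ.symm k : Fin R) : ℕ) < i₀
    · simp [hl, hk]
    · -- k unsaturated, l saturated: τ.symm l ≤ τ.symm k ⇒ φ k ≤ φ l, contra
      exfalso
      have hle : (τ.symm l) ≤ (τ.symm k) := by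
        have : ((τ.symm l : Fin R) : ℕ) ≤ ((τ.symm k : Fin R) : ℕ) :=
          le_trans (le_of_lt hl) (not_lt.mp hk)
        exact Fin.le_def.mpr this
      have := hord _ _ hle
      simp only [Equiv.apply_symm_apply] at this
      linarith
  · by_cases hk : ((τ.symm k : Fin R) : ℕ) < i₀
    · simp only [hl, hk, if_true, if_false]
      have hb := hbound l (not_lt.mp hl)
      have := mul_le_mul_of_nonneg_right hb (le_of_lt (hφpos l))
      rwa [inv_mul_cancel₀ (ne_of_gt (hφpos l))] at this
    · simp only [hl, hk, if_false]
      exact mul_le_mul_of_nonneg_left (le_of_lt hkl) hlam0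
end
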